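/- arXiv:2302.12537 — 3 statements merged into one kernel-verified Lean document; each statement's English description precedes it below -/
import Mathlib

section
/- Let δ : E × E → E be continuously differentiable, let ω⋆ ∈ E satisfy δ(ω⋆, ω⋆) = 0, let ω̄ ∈ E be arbitrary, and let ω̄⋆ ∈ E satisfy δ(ω̄⋆, ω̄) = 0. Then the path-mean Hessian and path-mean target Jacobian satisfy the exact identity H̄(ω̄⋆, ω⋆; ω̄) (ω̄⋆ − ω⋆) = J̄_δ(ω̄, ω⋆; ω⋆) (ω̄ − ω⋆). Consequently, if the continuous linear map H̄(ω̄⋆, ω⋆; ω̄) is invertible, then ω̄⋆ − ω⋆ = H̄(ω̄⋆, ω⋆; ω̄)⁻¹ (J̄_δ(ω̄, ω⋆; ω⋆) (ω̄ − ω⋆)). -/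
/-!
By the fundamental theorem of calculus along the segment from `ω̄⋆` to `ω⋆`,
`H̄(ω̄⋆, ω⋆; ω̄)(ω̄⋆ − ω⋆) = δ(ω⋆, ω̄) − δ(ω̄⋆, ω̄)`, and along the segment from `ω̄` to `ω⋆`,
`J̄_δ(ω̄, ω⋆; ω⋆)(ω̄ − ω⋆) = δ(ω⋆, ω̄) − δ(ω⋆, ω⋆)`. The two fixed-point equations make both
equal to `δ(ω⋆, ω̄)`.
-/

open MeasureTheory intervalIntegral

noncomputable section

abbrev E (n : ℕ) := EuclideanSpace ℝ (Fin n)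

/-- Partial Fréchet derivative of `δ` w.r.t. its first argument. -/
noncomputable def D1 {n : ℕ} (δ : E n × E n → E n) (a b : E n) : E n →L[ℝ] E n :=
  fderiv ℝ (fun x => δ (x, b)) a

/-- Partial Fréchet derivative of `δ` w.r.t. its second argument. -/
noncomputable def D2 {n : ℕ} (δ : E n × E n → E n) (a b : E n) : E n →L[ℝ] E n :=
  fderiv ℝ (fun y => δ (a, y)) b

/-- Path-mean Hessian `H̄(ω, ω⋆; ω̄) = −∫₀¹ D₁δ(ω − t(ω − ω⋆), ω̄) dt`. -/
noncomputable def Hbar {n : ℕ} (δ : E n × E n → E n) (ω ωs ωbar : E n) : E n →L[ℝ] E n :=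
  -∫ t in (0:ℝ)..1, D1 δ (ω - t • (ω - ωs)) ωbar

/-- Path-mean target Jacobian `J̄_δ(ω, ω⋆; ω̄) = ∫₀¹ D₂δ(ω̄, ω − t(ω − ω⋆)) dt`. -/
noncomputable def Jbar {n : ℕ} (δ : E n × E n → E n) (ω ωs ωbar : E n) : E n →L[ℝ] E n :=
  ∫ t in (0:ℝ)..1, D2 δ ωbar (ω - t • (ω - ωs))

section

variable {F G : Type*} [NormedAddCommGroup F] [NormedSpace ℝ F]
  [NormedAddCommGroup G] [NormedSpace ℝ G] [CompleteSpace G]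

theorem integral_fderiv_segment_apply_sub {f : F → G} (hf : ContDiff ℝ 1 f) (x y : F) :
    (∫ t in (0:ℝ)..1, fderiv ℝ f (x - t • (x - y))) (x - y) = f x - f y := by
  have hcont : Continuous fun t : ℝ => fderiv ℝ f (x - t • (x - y)) :=
    (hf.continuous_fderiv one_ne_zero).comp (by fun_prop)
  have hderiv : ∀ t ∈ Set.uIcc (0:ℝ) 1, HasDerivAt (fun t : ℝ => f (x - t • (x - y)))
      (-fderiv ℝ f (x - t • (x - y)) (x - y)) t := fun t _ => by
    refine ((hf.differentiable one_ne_zero _).hasFDerivAt.comp_hasDerivAt t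
      (((hasDerivAt_id t).smul_const (x - y)).const_sub x)).congr_deriv ?_
    simp
  have hftc := integral_eq_sub_of_hasDerivAt hderiv
    ((hcont.clm_apply continuous_const).neg.intervalIntegrable 0 1)
  simp only [intervalIntegral.integral_neg, one_smul, zero_smul, sub_zero, sub_sub_cancel] at hftc
  rw [neg_eq_iff_eq_neg, neg_sub] at hftc
  rwa [ContinuousLinearMap.intervalIntegral_apply (hcont.intervalIntegrable 0 1)]

end

section

variable {n : ℕ} {δ : E n × E n → E n}

theorem Hbar_apply_sub (hδ : ContDiff ℝ 1 δ) (ω ωs ωbar : E n) :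
    Hbar δ ω ωs ωbar (ω - ωs) = δ (ωs, ωbar) - δ (ω, ωbar) := by
  have hδ₁ : ContDiff ℝ 1 fun x => δ (x, ωbar) := hδ.comp (contDiff_id.prodMk contDiff_const)
  unfold Hbar D1
  rw [neg_apply, integral_fderiv_segment_apply_sub hδ₁, neg_sub]

theorem Jbar_apply_sub (hδ : ContDiff ℝ 1 δ) (ω ωs ωbar : E n) :
    Jbar δ ω ωs ωbar (ω - ωs) = δ (ωbar, ω) - δ (ωbar, ωs) := by
  have hδ₂ : ContDiff ℝ 1 fun y => δ (ωbar, y) := hδ.comp (contDiff_const.prodMk contDiff_id)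
  unfold Jbar D2
  rw [integral_fderiv_segment_apply_sub hδ₂]

end

/-- one step of fitted policy evaluation, Lemma A.1 of the paper:
if `δ(ω⋆, ω⋆) = 0` and `δ(ω̄⋆, ω̄) = 0` then
`H̄(ω̄⋆, ω⋆; ω̄) (ω̄⋆ − ω⋆) = J̄_δ(ω̄, ω⋆; ω⋆) (ω̄ − ω⋆)`, and whenever
`H̄(ω̄⋆, ω⋆; ω̄)` is invertible (as a continuous linear equivalence `Φ`),
`ω̄⋆ − ω⋆ = H̄(ω̄⋆, ω⋆; ω̄)⁻¹ (J̄_δ(ω̄, ω⋆; ω⋆) (ω̄ − ω⋆))`. -/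
theorem fpe_one_step {n : ℕ} (δ : E n × E n → E n) (hδ : ContDiff ℝ 1 δ)
    (ωs ωbar ωbars : E n) (hfix : δ (ωs, ωs) = 0) (hfit : δ (ωbars, ωbar) = 0) :
    Hbar δ ωbars ωs ωbar (ωbars - ωs) = Jbar δ ωbar ωs ωs (ωbar - ωs) ∧
      ∀ Φ : E n ≃L[ℝ] E n, (Φ : E n →L[ℝ] E n) = Hbar δ ωbars ωs ωbar →
        ωbars - ωs = Φ.symm (Jbar δ ωbar ωs ωs (ωbar - ωs)) := by
  have key : Hbar δ ωbars ωs ωbar (ωbars - ωs) = Jbar δ ωbar ωs ωs (ωbar - ωs) := by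
    rw [Hbar_apply_sub hδ, Jbar_apply_sub hδ, hfix, hfit]
  refine ⟨key, fun Φ hΦ => Φ.eq_symm_apply.mpr ?_⟩
  rw [← key, ← hΦ, ContinuousLinearEquiv.coe_coe]

end
end

section
/- Let g : E → E be continuously differentiable with g(ω⋆) = 0 for some ω⋆ ∈ E, and suppose that for every t ∈ [0,1] and every nonzero v ∈ E, ⟨v, Dg(ω − t(ω − ω⋆)) v⟩ < 0 (the Fréchet derivative of g is negative definite at every point of the segment joining ω to ω⋆). Then for every ω ≠ ω⋆, ⟨ω − ω⋆, g(ω)⟩ < 0; equivalently, the candidate Lyapunov function V(ω) = ½‖ω − ω⋆‖² satisfies ∇V(ω)ᵀ g(ω) < 0. -/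
/-!
With `v = ω - ω⋆`, the function `h t = ⟪v, g (ω - t • v)⟫` has derivative
`-⟪v, Dg (ω - t • v) v⟫ > 0` on `[0, 1]`, so `⟪v, g ω⟫ = h 0 < h 1 = ⟪v, g ω⋆⟫ = 0`.
-/

open scoped RealInnerProductSpace

open Set

section SegmentInner

variable {E F : Type*} [NormedAddCommGroup E] [NormedSpace ℝ E]
  [NormedAddCommGroup F] [InnerProductSpace ℝ F]

theorem hasDerivAt_inner_comp_sub_smul {g : E → F} {x v : E} {t : ℝ} (w : F)
    (hg : DifferentiableAt ℝ g (x - t • v)) :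
    HasDerivAt (fun s : ℝ => ⟪w, g (x - s • v)⟫) (-⟪w, fderiv ℝ g (x - t • v) v⟫) t := by
  have hline : HasDerivAt (fun s : ℝ => x - s • v) (-v) t := by
    simpa using ((hasDerivAt_id t).smul_const v).const_sub x
  have hcomp := (innerSL ℝ w).hasFDerivAt.comp_hasDerivAt t
    (hg.hasFDerivAt.comp_hasDerivAt t hline)
  simpa [Function.comp_def, inner_neg_right] using hcomp

theorem inner_lt_inner_of_fderiv_neg {g : E → F} (hg : Differentiable ℝ g) {x y : E} (w : F)
    (hneg : ∀ t ∈ Ioo (0 : ℝ) 1, ⟪w, fderiv ℝ g (x - t • (x - y)) (x - y)⟫ < 0) :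
    ⟪w, g x⟫ < ⟪w, g y⟫ := by
  set h : ℝ → ℝ := fun s => ⟪w, g (x - s • (x - y))⟫
  have hderiv (t : ℝ) := hasDerivAt_inner_comp_sub_smul w (hg (x - t • (x - y)))
  have hmono : StrictMonoOn h (Icc 0 1) := by
    refine strictMonoOn_of_deriv_pos (convex_Icc 0 1)
      (fun t _ => (hderiv t).continuousAt.continuousWithinAt) fun t ht => ?_
    rw [interior_Icc] at ht
    rw [(hderiv t).deriv]
    linarith [hneg t ht]
  simpa [h] using hmono (left_mem_Icc.mpr zero_le_one) (right_mem_Icc.mpr zero_le_one) one_pos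

end SegmentInner

/-- Lyapunov condition (c) in the proof of Theorem 2: if
`g` is continuously differentiable with `g(ω⋆) = 0` and the Fréchet derivative of `g`
is negative definite at every point of the segment joining `ω` to `ω⋆`
(for every `ω`), then `⟨ω − ω⋆, g(ω)⟩ < 0` for every `ω ≠ ω⋆`, i.e. the candidate
Lyapunov function `V(ω) = ½‖ω − ω⋆‖²` satisfies `∇V(ω)ᵀ g(ω) < 0`. -/
theorem lyapunov_negative {n : ℕ}
    (g : EuclideanSpace ℝ (Fin n) → EuclideanSpace ℝ (Fin n))
    (hg : ContDiff ℝ 1 g) (ωs : EuclideanSpace ℝ (Fin n)) (hfix : g ωs = 0)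
    (hneg : ∀ ω : EuclideanSpace ℝ (Fin n), ∀ t ∈ Set.Icc (0:ℝ) 1,
      ∀ v : EuclideanSpace ℝ (Fin n), v ≠ 0 →
        ⟪v, fderiv ℝ g (ω - t • (ω - ωs)) v⟫ < 0) :
    ∀ ω : EuclideanSpace ℝ (Fin n), ω ≠ ωs → ⟪ω - ωs, g ω⟫ < 0 := by
  intro ω hω
  have hlt := inner_lt_inner_of_fderiv_neg (hg.differentiable one_ne_zero) (ω - ωs)
    fun t ht => hneg ω t (Ioo_subset_Icc_self ht) _ (sub_ne_zero.mpr hω)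
  simpa [hfix] using hlt
end

section
/- Let (Ω, F, P) be a probability space, n a natural number, γ ≥ 0, and let φ, φ′ : Ω → EuclideanSpace ℝ (Fin n) be random feature vectors such that ⟨φ, ω⟩ and ⟨φ′, ω⟩ are square-integrable for every ω. Suppose the low-distribution-shift condition holds: for every nonzero ω ∈ EuclideanSpace ℝ (Fin n), γ·√(E[⟨φ′, ω⟩²]) < √(E[⟨φ, ω⟩²]). Then for every nonzero ω, γ·E[⟨φ′, ω⟩·⟨φ, ω⟩] − E[⟨φ, ω⟩²] < 0; that is, the quadratic form of the linear TD Jacobian γΦ′ − Φ is strictly negative, where Φ = E[φφᵀ] and Φ′ = E[φ′φᵀ]. -/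
open MeasureTheory
open scoped RealInnerProductSpace

namespace MeasureTheory.MemLp

variable {Ω : Type*} [MeasurableSpace Ω] {P : Measure Ω} {f g : Ω → ℝ}

lemma inner_toLp_toLp (hf : MemLp f 2 P) (hg : MemLp g 2 P) :
    ⟪hf.toLp f, hg.toLp g⟫ = ∫ x, f x * g x ∂P := by
  rw [L2.inner_def]
  refine integral_congr_ae ?_
  filter_upwards [hf.coeFn_toLp, hg.coeFn_toLp] with x hfx hgx
  simp [hfx, hgx, mul_comm]

lemma norm_toLp_eq_sqrt_integral_sq (hf : MemLp f 2 P) :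
    ‖hf.toLp f‖ = Real.sqrt (∫ x, f x ^ 2 ∂P) := by
  simp only [norm_eq_sqrt_real_inner, hf.inner_toLp_toLp, sq]

end MeasureTheory.MemLp

lemma integral_mul_le_sqrt_integral_sq_mul_sqrt_integral_sq {Ω : Type*} [MeasurableSpace Ω]
    {P : Measure Ω} {f g : Ω → ℝ} (hf : MemLp f 2 P) (hg : MemLp g 2 P) :
    ∫ x, f x * g x ∂P ≤ Real.sqrt (∫ x, f x ^ 2 ∂P) * Real.sqrt (∫ x, g x ^ 2 ∂P) := by
  rw [← hf.inner_toLp_toLp hg, ← hf.norm_toLp_eq_sqrt_integral_sq,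
    ← hg.norm_toLp_eq_sqrt_integral_sq]
  exact real_inner_le_norm _ _

theorem low_shift_implies_td_stability_general {n : ℕ} {Ω : Type*} [MeasurableSpace Ω]
    (P : Measure Ω)
    (γ : ℝ) (hγ : 0 ≤ γ)
    (φ φ' : Ω → EuclideanSpace ℝ (Fin n))
    (hφ : ∀ ω : EuclideanSpace ℝ (Fin n), MemLp (fun x => ⟪φ x, ω⟫) 2 P)
    (hφ' : ∀ ω : EuclideanSpace ℝ (Fin n), MemLp (fun x => ⟪φ' x, ω⟫) 2 P)
    (hshift : ∀ ω : EuclideanSpace ℝ (Fin n), ω ≠ 0 →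
      γ * Real.sqrt (∫ x, ⟪φ' x, ω⟫ ^ 2 ∂P) < Real.sqrt (∫ x, ⟪φ x, ω⟫ ^ 2 ∂P)) :
    ∀ ω : EuclideanSpace ℝ (Fin n), ω ≠ 0 →
      γ * (∫ x, ⟪φ' x, ω⟫ * ⟪φ x, ω⟫ ∂P) - (∫ x, ⟪φ x, ω⟫ ^ 2 ∂P) < 0 := by
  intro ω hω
  set normQ := Real.sqrt (∫ x, ⟪φ x, ω⟫ ^ 2 ∂P)
  set normQ' := Real.sqrt (∫ x, ⟪φ' x, ω⟫ ^ 2 ∂P)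
  have hshiftω : γ * normQ' < normQ := hshift ω hω
  have hnormQ_pos : 0 < normQ :=
    (mul_nonneg hγ (Real.sqrt_nonneg _)).trans_lt hshiftω
  have hcs := integral_mul_le_sqrt_integral_sq_mul_sqrt_integral_sq (hφ' ω) (hφ ω)
  suffices γ * ∫ x, ⟪φ' x, ω⟫ * ⟪φ x, ω⟫ ∂P < ∫ x, ⟪φ x, ω⟫ ^ 2 ∂P by linarith
  calc γ * ∫ x, ⟪φ' x, ω⟫ * ⟪φ x, ω⟫ ∂P
      ≤ γ * (normQ' * normQ) := mul_le_mul_of_nonneg_left hcs hγ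
    _ = (γ * normQ') * normQ := (mul_assoc _ _ _).symm
    _ < normQ * normQ := mul_lt_mul_of_pos_right hshiftω hnormQ_pos
    _ = ∫ x, ⟪φ x, ω⟫ ^ 2 ∂P := Real.mul_self_sqrt (integral_nonneg fun _ => sq_nonneg _)

/-- low distribution shift implies TD stability, Appendix A.1 of the
paper: if for every nonzero `ω` the low-distribution-shift condition
`γ·√(E[⟨φ′, ω⟩²]) < √(E[⟨φ, ω⟩²])` holds, then the quadratic form of the linear TD
Jacobian `γΦ′ − Φ` is strictly negative:
`γ·E[⟨φ′, ω⟩·⟨φ, ω⟩] − E[⟨φ, ω⟩²] < 0` for every nonzero `ω`. -/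
theorem low_shift_implies_td_stability {n : ℕ} {Ω : Type*} [MeasurableSpace Ω]
    (P : Measure Ω) [IsProbabilityMeasure P]
    (γ : ℝ) (hγ : 0 ≤ γ)
    (φ φ' : Ω → EuclideanSpace ℝ (Fin n))
    (hφ : ∀ ω : EuclideanSpace ℝ (Fin n), MemLp (fun x => ⟪φ x, ω⟫) 2 P)
    (hφ' : ∀ ω : EuclideanSpace ℝ (Fin n), MemLp (fun x => ⟪φ' x, ω⟫) 2 P)
    (hshift : ∀ ω : EuclideanSpace ℝ (Fin n), ω ≠ 0 →
      γ * Real.sqrt (∫ x, ⟪φ' x, ω⟫ ^ 2 ∂P) < Real.sqrt (∫ x, ⟪φ x, ω⟫ ^ 2 ∂P)) :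
    ∀ ω : EuclideanSpace ℝ (Fin n), ω ≠ 0 →
      γ * (∫ x, ⟪φ' x, ω⟫ * ⟪φ x, ω⟫ ∂P) - (∫ x, ⟪φ x, ω⟫ ^ 2 ∂P) < 0 :=
  low_shift_implies_td_stability_general P γ hγ φ φ' hφ hφ' hshift
end
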